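/- Fix real numbers v_1, v_2, v_3, v_5, v_6, and for w ∈ ℝ let f_w : ℝ⁴ → ℝ denote the Hankel quartic form with symmetric generating vector determined by (w, v_1, v_2, v_3, 1, v_5, v_6). Suppose the 35-equation constraint system is solvable at some value w ∈ ℝ (i.e., there exist real α_{k,j}, 1 ≤ k ≤ j ≤ 10, satisfying the constraint system with v_0 replaced by w), and let v_0 ≥ w. Then f_{v_0} is a sum of squares of quadratic forms; indeed f_{v_0}(x) = Σ_{k=1}^{10} q_k(x)² + (v_0 − w)x_1⁴ + (v_0 − w)x_4⁴ for all x ∈ ℝ⁴, so f_{v_0} is a sum of squares of at most 12 quadratic forms. (This is Theorem 1: if v_0 ≥ M_1(v_2, v_6, v_1, v_3, v_5), the minimum of w over the feasible set of the constraint system, then the Hankel tensor is SOS.) -/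

import Mathlib

/-!
Writing `m(x)` for the vector of the ten quadratic monomials and `A = (α_{k,j})` for the upper
triangular coefficient matrix, `Σ_k q_k(x)² = m(x)ᵀ (AᵀA) m(x)`. The 35 constraints say exactly
that the coefficient of each of the 35 quartic monomials in this expression agrees with its
coefficient in `f_w`, so `f_w = Σ_k q_k²`. Raising `v_0` from `w` only changes the coefficients
`u_0 = u_12` of `x_1⁴` and `x_4⁴`, which adds the two squares `(√(v_0 - w) x_1²)²` and
`(√(v_0 - w) x_4²)²`.
-/

open Finset

/-- The symmetric generating vector u = (u_0, ..., u_12) with u_j = u_{12-j},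
    u_4 = u_8 = 1, u_0 = v_0, u_1 = v_1, u_2 = v_2, u_3 = v_3, u_5 = v_5, u_6 = v_6. -/
noncomputable def genVec (v0 v1 v2 v3 v5 v6 : ℝ) : Fin 13 → ℝ :=
  ![v0, v1, v2, v3, 1, v5, v6, v5, 1, v3, v2, v1, v0]

/-- The quartic form of the fourth order four dimensional Hankel tensor with
    generating vector `genVec v0 v1 v2 v3 v5 v6`:
    f(x) = Σ_{i,j,k,l=1}^{4} u_{i+j+k+l-4} x_i x_j x_k x_l (zero-based indices). -/
noncomputable def hankelF (v0 v1 v2 v3 v5 v6 : ℝ) (x : Fin 4 → ℝ) : ℝ :=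
  ∑ i : Fin 4, ∑ j : Fin 4, ∑ k : Fin 4, ∑ l : Fin 4,
    genVec v0 v1 v2 v3 v5 v6 ⟨i.1 + j.1 + k.1 + l.1, by omega⟩ * x i * x j * x k * x l

/-- The ten quadratic monomials, 1-indexed:
    m = (x_1², x_2², x_3², x_4², x_1x_3, x_2x_4, x_1x_2, x_3x_4, x_2x_3, x_1x_4). -/
noncomputable def mon (x : Fin 4 → ℝ) : ℕ → ℝ
  | 1 => x 0 ^ 2
  | 2 => x 1 ^ 2
  | 3 => x 2 ^ 2
  | 4 => x 3 ^ 2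
  | 5 => x 0 * x 2
  | 6 => x 1 * x 3
  | 7 => x 0 * x 1
  | 8 => x 2 * x 3
  | 9 => x 1 * x 2
  | 10 => x 0 * x 3
  | _ => 0

/-- The triangular (Cholesky-type) quadratic forms q_k(x) = Σ_{j=k}^{10} α_{k,j} m_j(x). -/
noncomputable def qf (α : ℕ → ℕ → ℝ) (k : ℕ) (x : Fin 4 → ℝ) : ℝ :=
  ∑ j ∈ Finset.Icc k 10, α k j * mon x j

/-- `p` is a quadratic form on ℝ⁴: a real linear combination of the ten quadratic monomials. -/
def IsQuadForm (p : (Fin 4 → ℝ) → ℝ) : Prop :=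
  ∃ c : ℕ → ℝ, ∀ x, p x = ∑ j ∈ Finset.Icc 1 10, c j * mon x j

/-- The 35 Gram coefficient-matching equality constraints on the parameters α_{k,j}. -/
def Constr (v0 v1 v2 v3 v5 v6 : ℝ) (α : ℕ → ℕ → ℝ) : Prop :=
  v0 = (α 1 1) ^ 2 ∧
  4 * v1 = 2 * α 1 1 * α 1 7 ∧
  4 * v2 = 2 * α 1 1 * α 1 5 ∧
  6 * v2 = 2 * α 1 1 * α 1 2 + ∑ k ∈ Finset.Icc 1 7, (α k 7) ^ 2 ∧
  4 * v3 = 2 * α 1 1 * α 1 10 ∧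
  12 * v3 = 2 * α 1 1 * α 1 9 + 2 * ∑ k ∈ Finset.Icc 1 5, α k 5 * α k 7 ∧
  4 * v3 = 2 * ∑ k ∈ Finset.Icc 1 2, α k 2 * α k 7 ∧
  (12 : ℝ) = 2 * α 1 1 * α 1 6 + 2 * ∑ k ∈ Finset.Icc 1 7, α k 7 * α k 10 ∧
  (6 : ℝ) = 2 * α 1 1 * α 1 3 + ∑ k ∈ Finset.Icc 1 5, (α k 5) ^ 2 ∧
  (12 : ℝ) = 2 * ∑ k ∈ Finset.Icc 1 2, α k 2 * α k 5 + 2 * ∑ k ∈ Finset.Icc 1 7, α k 7 * α k 9 ∧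
  (1 : ℝ) = ∑ k ∈ Finset.Icc 1 2, (α k 2) ^ 2 ∧
  12 * v5 = 2 * α 1 1 * α 1 8 + 2 * ∑ k ∈ Finset.Icc 1 5, α k 5 * α k 10 ∧
  12 * v5 = 2 * ∑ k ∈ Finset.Icc 1 2, α k 2 * α k 10 + 2 * ∑ k ∈ Finset.Icc 1 6, α k 6 * α k 7 ∧
  12 * v5 = 2 * ∑ k ∈ Finset.Icc 1 3, α k 3 * α k 7 + 2 * ∑ k ∈ Finset.Icc 1 5, α k 5 * α k 9 ∧
  4 * v5 = 2 * ∑ k ∈ Finset.Icc 1 2, α k 2 * α k 9 ∧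
  6 * v6 = 2 * α 1 1 * α 1 4 + ∑ k ∈ Finset.Icc 1 10, (α k 10) ^ 2 ∧
  24 * v6 = 2 * ∑ k ∈ Finset.Icc 1 5, α k 5 * α k 6 + 2 * ∑ k ∈ Finset.Icc 1 7, α k 7 * α k 8
            + 2 * ∑ k ∈ Finset.Icc 1 9, α k 9 * α k 10 ∧
  4 * v6 = 2 * ∑ k ∈ Finset.Icc 1 3, α k 3 * α k 5 ∧
  4 * v6 = 2 * ∑ k ∈ Finset.Icc 1 2, α k 2 * α k 6 ∧
  6 * v6 = 2 * ∑ k ∈ Finset.Icc 1 2, α k 2 * α k 3 + ∑ k ∈ Finset.Icc 1 9, (α k 9) ^ 2 ∧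
  12 * v5 = 2 * ∑ k ∈ Finset.Icc 1 4, α k 4 * α k 7 + 2 * ∑ k ∈ Finset.Icc 1 6, α k 6 * α k 10 ∧
  12 * v5 = 2 * ∑ k ∈ Finset.Icc 1 3, α k 3 * α k 10 + 2 * ∑ k ∈ Finset.Icc 1 5, α k 5 * α k 8 ∧
  12 * v5 = 2 * ∑ k ∈ Finset.Icc 1 2, α k 2 * α k 8 + 2 * ∑ k ∈ Finset.Icc 1 6, α k 6 * α k 9 ∧
  4 * v5 = 2 * ∑ k ∈ Finset.Icc 1 3, α k 3 * α k 9 ∧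
  (12 : ℝ) = 2 * ∑ k ∈ Finset.Icc 1 4, α k 4 * α k 5 + 2 * ∑ k ∈ Finset.Icc 1 8, α k 8 * α k 10 ∧
  (6 : ℝ) = 2 * ∑ k ∈ Finset.Icc 1 2, α k 2 * α k 4 + ∑ k ∈ Finset.Icc 1 6, (α k 6) ^ 2 ∧
  (12 : ℝ) = 2 * ∑ k ∈ Finset.Icc 1 3, α k 3 * α k 6 + 2 * ∑ k ∈ Finset.Icc 1 8, α k 8 * α k 9 ∧
  (1 : ℝ) = ∑ k ∈ Finset.Icc 1 3, (α k 3) ^ 2 ∧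
  4 * v3 = 2 * ∑ k ∈ Finset.Icc 1 4, α k 4 * α k 10 ∧
  12 * v3 = 2 * ∑ k ∈ Finset.Icc 1 4, α k 4 * α k 9 + 2 * ∑ k ∈ Finset.Icc 1 6, α k 6 * α k 8 ∧
  4 * v3 = 2 * ∑ k ∈ Finset.Icc 1 3, α k 3 * α k 8 ∧
  4 * v2 = 2 * ∑ k ∈ Finset.Icc 1 4, α k 4 * α k 6 ∧
  6 * v2 = 2 * ∑ k ∈ Finset.Icc 1 3, α k 3 * α k 4 + ∑ k ∈ Finset.Icc 1 8, (α k 8) ^ 2 ∧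
  4 * v1 = 2 * ∑ k ∈ Finset.Icc 1 4, α k 4 * α k 8 ∧
  v0 = ∑ k ∈ Finset.Icc 1 4, (α k 4) ^ 2

section Gram

variable {R : Type*} [CommSemiring R]

/-- The `(i, j)` entry of `AᵀA` for the upper triangular matrix `A = (α k j)_{k ≤ j}`, written
with `min`/`max` so that `gram α i j` and `gram α j i` unfold to the same sum. -/
def gram (α : ℕ → ℕ → R) (i j : ℕ) : R :=
  ∑ k ∈ Icc 1 (min i j), α k (min i j) * α k (max i j)

theorem sum_mul_eq_gram (α : ℕ → ℕ → R) (i j : ℕ) :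
    ∑ k ∈ Icc 1 (min i j), α k i * α k j = gram α i j := by
  rcases le_total i j with h | h <;> simp [gram, h, mul_comm]

theorem sum_sq_triangular (α : ℕ → ℕ → R) (m : ℕ → R) (n : ℕ) :
    ∑ k ∈ Icc 1 n, (∑ j ∈ Icc k n, α k j * m j) ^ 2 =
      ∑ i ∈ Icc 1 n, ∑ j ∈ Icc 1 n, gram α i j * m i * m j := by
  calc ∑ k ∈ Icc 1 n, (∑ j ∈ Icc k n, α k j * m j) ^ 2
      = ∑ k ∈ Icc 1 n, ∑ i ∈ Icc k n, ∑ j ∈ Icc k n, α k i * α k j * m i * m j := by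
        refine sum_congr rfl fun k _ => ?_
        rw [sq, sum_mul_sum]
        exact sum_congr rfl fun i _ => sum_congr rfl fun j _ => by ring
    _ = ∑ i ∈ Icc 1 n, ∑ k ∈ Icc 1 i, ∑ j ∈ Icc k n, α k i * α k j * m i * m j :=
        sum_comm' fun k i => by simp only [mem_Icc]; omega
    _ = ∑ i ∈ Icc 1 n, ∑ j ∈ Icc 1 n, ∑ k ∈ Icc 1 (min i j), α k i * α k j * m i * m j :=
        sum_congr rfl fun i _ => sum_comm' fun k j => by simp only [mem_Icc]; omega
    _ = ∑ i ∈ Icc 1 n, ∑ j ∈ Icc 1 n, gram α i j * m i * m j := by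
        simp only [← sum_mul_eq_gram, sum_mul]

end Gram

theorem hankelF_expand (v0 v1 v2 v3 v5 v6 : ℝ) (x : Fin 4 → ℝ) :
    hankelF v0 v1 v2 v3 v5 v6 x =
    v0*x 0^4 + 4*v1*x 0^3*x 1 + 4*v2*x 0^3*x 2 + 6*v2*x 0^2*x 1^2 + 4*v3*x 0^3*x 3
    + 12*v3*x 0^2*x 1*x 2 + 4*v3*x 0*x 1^3 + 12*x 0^2*x 1*x 3 + 6*x 0^2*x 2^2
    + 12*x 0*x 1^2*x 2 + x 1^4 + 12*v5*x 0^2*x 2*x 3 + 12*v5*x 0*x 1^2*x 3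
    + 12*v5*x 0*x 1*x 2^2 + 4*v5*x 1^3*x 2 + 6*v6*x 0^2*x 3^2 + 24*v6*x 0*x 1*x 2*x 3
    + 4*v6*x 0*x 2^3 + 4*v6*x 1^3*x 3 + 6*v6*x 1^2*x 2^2 + 12*v5*x 0*x 1*x 3^2
    + 12*v5*x 0*x 2^2*x 3 + 12*v5*x 1^2*x 2*x 3 + 4*v5*x 1*x 2^3 + 12*x 0*x 2*x 3^2
    + 6*x 1^2*x 3^2 + 12*x 1*x 2^2*x 3 + x 2^4 + 4*v3*x 0*x 3^3 + 12*v3*x 1*x 2*x 3^2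
    + 4*v3*x 2^3*x 3 + 4*v2*x 1*x 3^3 + 6*v2*x 2^2*x 3^2 + 4*v1*x 2*x 3^3 + v0*x 3^4 := by
  simp only [hankelF, Fin.sum_univ_four]
  simp only [genVec, Fin.isValue, Fin.coe_ofNat_eq_mod, Nat.zero_mod, add_zero, Fin.zero_eta,
    Matrix.cons_val_zero, Nat.one_mod, zero_add, Fin.mk_one, Matrix.cons_val_one, Nat.reduceMod,
    Fin.reduceFinMk, Matrix.cons_val, Nat.mod_succ, Nat.reduceAdd, one_mul]
  ring

theorem hankelF_eq_add (v0 w v1 v2 v3 v5 v6 : ℝ) (x : Fin 4 → ℝ) :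
    hankelF v0 v1 v2 v3 v5 v6 x =
      hankelF w v1 v2 v3 v5 v6 x + (v0 - w) * x 0 ^ 4 + (v0 - w) * x 3 ^ 4 := by
  rw [hankelF_expand, hankelF_expand]
  ring

theorem hankelF_eq_sum_sq_qf {w v1 v2 v3 v5 v6 : ℝ} {α : ℕ → ℕ → ℝ}
    (hα : Constr w v1 v2 v3 v5 v6 α) (x : Fin 4 → ℝ) :
    hankelF w v1 v2 v3 v5 v6 x = ∑ k ∈ Icc 1 10, qf α k x ^ 2 := by
  obtain ⟨h1, h2, h3, h4, h5, h6, h7, h8, h9, h10, h11, h12, h13, h14, h15, h16, h17, h18,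
    h19, h20, h21, h22, h23, h24, h25, h26, h27, h28, h29, h30, h31, h32, h33, h34, h35⟩ := hα
  rw [hankelF_expand]
  simp only [qf, sum_sq_triangular]
  simp (disch := omega) only [sum_Icc_succ_top, Icc_self, sum_singleton, Nat.reduceAdd]
  simp only [gram, mon, min_def, max_def, Nat.reduceLeDiff, ite_true, ite_false, Icc_self,
    sum_singleton]
  simp only [sq] at *
  linear_combination h1 * (x 0^4) + h2 * (x 0^3*x 1) + h3 * (x 0^3*x 2)
      + h4 * (x 0^2*x 1^2) + h5 * (x 0^3*x 3) + h6 * (x 0^2*x 1*x 2) + h7 * (x 0*x 1^3)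
      + h8 * (x 0^2*x 1*x 3) + h9 * (x 0^2*x 2^2) + h10 * (x 0*x 1^2*x 2) + h11 * (x 1^4)
      + h12 * (x 0^2*x 2*x 3) + h13 * (x 0*x 1^2*x 3) + h14 * (x 0*x 1*x 2^2)
      + h15 * (x 1^3*x 2) + h16 * (x 0^2*x 3^2) + h17 * (x 0*x 1*x 2*x 3)
      + h18 * (x 0*x 2^3) + h19 * (x 1^3*x 3) + h20 * (x 1^2*x 2^2)
      + h21 * (x 0*x 1*x 3^2) + h22 * (x 0*x 2^2*x 3) + h23 * (x 1^2*x 2*x 3)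
      + h24 * (x 1*x 2^3) + h25 * (x 0*x 2*x 3^2) + h26 * (x 1^2*x 3^2)
      + h27 * (x 1*x 2^2*x 3) + h28 * (x 2^4) + h29 * (x 0*x 3^3)
      + h30 * (x 1*x 2*x 3^2) + h31 * (x 2^3*x 3) + h32 * (x 1*x 3^3)
      + h33 * (x 2^2*x 3^2) + h34 * (x 2*x 3^3) + h35 * (x 3^4)

theorem isQuadForm_qf (α : ℕ → ℕ → ℝ) {k : ℕ} (hk : 1 ≤ k) : IsQuadForm (qf α k) := by
  refine ⟨fun j => if k ≤ j then α k j else 0, fun x => ?_⟩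
  rw [qf, ← sum_subset (Icc_subset_Icc_left hk)]
  · exact sum_congr rfl fun j hj => by simp [(mem_Icc.1 hj).1]
  · intro j hj hjk
    simp_all

theorem isQuadForm_const_mul_mon (c : ℝ) {j : ℕ} (hj : j ∈ Icc 1 10) :
    IsQuadForm fun x => c * mon x j :=
  ⟨fun i => if i = j then c else 0, fun x => by simp [ite_mul, hj]⟩

/-- Theorem 1: if the constraint system is solvable at w and v₀ ≥ w, then
f_{v₀}(x) = Σ_{k=1}^{10} q_k(x)² + (v₀-w)x₁⁴ + (v₀-w)x₄⁴, so f_{v₀} is a sum of squares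
of at most 12 quadratic forms. -/
theorem hankel_sos_above_critical (v1 v2 v3 v5 v6 w v0 : ℝ) (α : ℕ → ℕ → ℝ)
    (hα : Constr w v1 v2 v3 v5 v6 α) (hv : w ≤ v0) :
    (∀ x : Fin 4 → ℝ,
        hankelF v0 v1 v2 v3 v5 v6 x =
          (∑ k ∈ Finset.Icc 1 10, (qf α k x) ^ 2)
            + (v0 - w) * (x 0) ^ 4 + (v0 - w) * (x 3) ^ 4) ∧
    ∃ p : Fin 12 → ((Fin 4 → ℝ) → ℝ), (∀ i, IsQuadForm (p i)) ∧
      ∀ x : Fin 4 → ℝ, hankelF v0 v1 v2 v3 v5 v6 x = ∑ i, (p i x) ^ 2 := by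
  have hsos (x : Fin 4 → ℝ) : hankelF v0 v1 v2 v3 v5 v6 x =
      ∑ k ∈ Icc 1 10, qf α k x ^ 2 + (v0 - w) * x 0 ^ 4 + (v0 - w) * x 3 ^ 4 := by
    rw [hankelF_eq_add v0 w, hankelF_eq_sum_sq_qf hα]
  refine ⟨hsos, ![qf α 1, qf α 2, qf α 3, qf α 4, qf α 5, qf α 6, qf α 7, qf α 8, qf α 9,
    qf α 10, fun x => √(v0 - w) * mon x 1, fun x => √(v0 - w) * mon x 4], ?_, fun x => ?_⟩
  · intro i
    fin_cases i
    all_goals first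
      | exact isQuadForm_qf α (by norm_num)
      | exact isQuadForm_const_mul_mon _ (by simp)
  · have hs : √(v0 - w) ^ 2 = v0 - w := Real.sq_sqrt (sub_nonneg.2 hv)
    simp only [hsos, Nat.reduceAdd, Nat.one_le_ofNat, sum_Icc_succ_top, Icc_self, sum_singleton,
      Fin.isValue, mon, Matrix.cons_val', Matrix.cons_val_fin_one, Fin.sum_univ_succ,
      Matrix.cons_val_zero, Matrix.cons_val_succ, mul_pow, hs, univ_unique, Fin.default_eq_zero,
      sum_const, card_singleton, one_smul]
    ring
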